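/- arXiv:2501.02900 — 12 statements merged into one kernel-verified Lean document; each statement's English description precedes it below -/
import Mathlib

section
/- Let T > 0, let f : ℝ → ℝ be continuous and T-periodic, and let γ : ℝ → ℝ be differentiable, T-periodic, and satisfy γ'(t) + γ(t)² = f(t) for all t ∈ ℝ. Set ᾱ := (1/T)∫₀ᵀ γ(s) ds and define y(t) := exp(∫₀ᵗ (γ(s) − ᾱ) ds). Then y is positive, T-periodic, twice differentiable, and satisfies −y''(t) − 2ᾱ y'(t) − ᾱ² y(t) = −f(t) y(t) for all t ∈ ℝ. -/
/-!
Since `y = exp (∫₀ᵗ (γ - ᾱ))`, we have `y' = (γ - ᾱ) y` and hence `y'' = (γ' + (γ - ᾱ)²) y`;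
expanding the square and using `γ' + γ² = f` gives the Hill-type equation. Periodicity of `y`
holds because `γ - ᾱ` is periodic with zero mean over a period, so its primitive is periodic.
-/

open Real intervalIntegral

theorem Function.Periodic.intervalIntegral_periodic_of_integral_eq_zero {E : Type*}
    [NormedAddCommGroup E] [NormedSpace ℝ E] {g : ℝ → E} {T : ℝ} (hg : g.Periodic T)
    (hint : ∀ a b, IntervalIntegrable g MeasureTheory.volume a b)
    (hmean : ∫ x in (0:ℝ)..T, g x = 0) :
    (fun t ↦ ∫ x in (0:ℝ)..t, g x).Periodic T := fun t ↦ by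
  simpa [hmean] using hg.intervalIntegral_add_eq_add 0 t hint

theorem intervalIntegral_sub_average_eq_zero {g : ℝ → ℝ} {T : ℝ} (hT : T ≠ 0)
    (hg : IntervalIntegrable g MeasureTheory.volume 0 T) :
    ∫ x in (0:ℝ)..T, (g x - (1 / T) * ∫ s in (0:ℝ)..T, g s) = 0 := by
  rw [integral_sub hg intervalIntegrable_const, integral_const, smul_eq_mul]
  field_simp
  ring

theorem hasDerivAt_exp_integral {g : ℝ → ℝ} (hg : Continuous g) (a t : ℝ) :
    HasDerivAt (fun t ↦ exp (∫ s in a..t, g s)) (g t * exp (∫ s in a..t, g s)) t := by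
  have hprim : HasDerivAt (fun t ↦ ∫ s in a..t, g s) (g t) t :=
    integral_hasDerivAt_right (hg.intervalIntegrable _ _) (hg.stronglyMeasurableAtFilter _ _)
      hg.continuousAt
  simpa only [mul_comm] using hprim.exp

theorem hasDerivAt_deriv_of_hasDerivAt_mul {g y : ℝ → ℝ} (hg : Differentiable ℝ g)
    (hy : ∀ t, HasDerivAt y (g t * y t) t) (t : ℝ) :
    HasDerivAt (deriv y) ((deriv g t + g t ^ 2) * y t) t := by
  have hy' : deriv y = fun t ↦ g t * y t := funext fun t ↦ (hy t).deriv
  rw [hy']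
  exact ((hg t).hasDerivAt.mul (hy t)).congr_deriv (by ring)

theorem stmt_0_general (T : ℝ) (hT : 0 < T) (f γ : ℝ → ℝ)
    (hγd : Differentiable ℝ γ) (hγper : ∀ t, γ (t + T) = γ t)
    (hric : ∀ t, deriv γ t + γ t ^ 2 = f t)
    (α : ℝ) (hα : α = (1 / T) * ∫ s in (0:ℝ)..T, γ s)
    (y : ℝ → ℝ) (hy : ∀ t, y t = Real.exp (∫ s in (0:ℝ)..t, (γ s - α))) :
    (∀ t, 0 < y t) ∧ (∀ t, y (t + T) = y t) ∧
    Differentiable ℝ y ∧ Differentiable ℝ (deriv y) ∧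
    (∀ t, -deriv (deriv y) t - 2 * α * deriv y t - α ^ 2 * y t = -f t * y t) := by
  obtain rfl : y = fun t ↦ exp (∫ s in (0:ℝ)..t, (γ s - α)) := funext hy
  have hcont : Continuous fun s ↦ γ s - α := hγd.continuous.sub continuous_const
  have hy' := hasDerivAt_exp_integral hcont 0
  have hy'' := hasDerivAt_deriv_of_hasDerivAt_mul (hγd.sub_const α) hy'
  refine ⟨fun t ↦ exp_pos _, fun t ↦ ?_, fun t ↦ (hy' t).differentiableAt,
    fun t ↦ (hy'' t).differentiableAt, fun t ↦ ?_⟩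
  · have hper : Function.Periodic (fun s ↦ γ s - α) T := fun s ↦ by simp only [hγper s]
    have hmean : ∫ s in (0:ℝ)..T, (γ s - α) = 0 :=
      hα ▸ intervalIntegral_sub_average_eq_zero hT.ne' (hγd.continuous.intervalIntegrable _ _)
    simp only [hper.intervalIntegral_periodic_of_integral_eq_zero
      (fun _ _ ↦ hcont.intervalIntegrable _ _) hmean t]
  · rw [(hy'' t).deriv, (hy' t).deriv, deriv_sub_const, ← hric t]
    ring

/-- From a `T`-periodic solution of the Riccati equation `γ' + γ² = f`, the function
`y(t) = exp(∫₀ᵗ (γ − ᾱ))`, with `ᾱ` the average of `γ` over a period, is a positive,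
`T`-periodic, twice differentiable solution of `−y'' − 2ᾱ y' − ᾱ² y = −f y`. -/
theorem stmt_0 (T : ℝ) (hT : 0 < T) (f γ : ℝ → ℝ)
    (hf : Continuous f) (hfper : ∀ t, f (t + T) = f t)
    (hγd : Differentiable ℝ γ) (hγper : ∀ t, γ (t + T) = γ t)
    (hric : ∀ t, deriv γ t + γ t ^ 2 = f t)
    (α : ℝ) (hα : α = (1 / T) * ∫ s in (0:ℝ)..T, γ s)
    (y : ℝ → ℝ) (hy : ∀ t, y t = Real.exp (∫ s in (0:ℝ)..t, (γ s - α))) :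
    (∀ t, 0 < y t) ∧ (∀ t, y (t + T) = y t) ∧
    Differentiable ℝ y ∧ Differentiable ℝ (deriv y) ∧
    (∀ t, -deriv (deriv y) t - 2 * α * deriv y t - α ^ 2 * y t = -f t * y t) :=
  stmt_0_general T hT f γ hγd hγper hric α hα y hy
end

section
/- Let T > 0, let f : ℝ → ℝ be continuous and T-periodic, let α ∈ ℝ, and let y : ℝ → ℝ be twice differentiable, T-periodic, everywhere positive, and satisfy −y''(t) − 2α y'(t) − α² y(t) = −f(t) y(t) for all t ∈ ℝ. Then the function γ := α + y'/y is differentiable, T-periodic, satisfies γ'(t) + γ(t)² = f(t) for all t ∈ ℝ, and moreover (1/T)∫₀ᵀ γ(s) ds = α. -/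
/-! The substitution `γ = α + y'/y` writes `γ - α` as the logarithmic derivative of `y`, and
`(y'/y)' + (y'/y)² = y''/y` turns the Hill-type equation for `y` into the Riccati equation for
`γ`. Since `y'/y = (log y)'` and `y` is periodic, `y'/y` has mean zero over a period, so `γ`
has mean `α`. -/

open Function Real intervalIntegral

theorem Function.Periodic.deriv {𝕜 F : Type*} [NontriviallyNormedField 𝕜] [NormedAddCommGroup F]
    [NormedSpace 𝕜 F] {f : 𝕜 → F} {c : 𝕜} (h : Periodic f c) : Periodic (deriv f) c := fun x => by
  rw [← deriv_comp_add_const, h.funext]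

theorem Function.Periodic.logDeriv {𝕜 𝕜' : Type*} [NontriviallyNormedField 𝕜]
    [NontriviallyNormedField 𝕜'] [NormedAlgebra 𝕜 𝕜'] {f : 𝕜 → 𝕜'} {c : 𝕜} (h : Periodic f c) :
    Periodic (logDeriv f) c :=
  h.deriv.div h

theorem deriv_logDeriv_add_sq {𝕜 : Type*} [NontriviallyNormedField 𝕜] {f : 𝕜 → 𝕜} {x : 𝕜}
    (hf : DifferentiableAt 𝕜 f x) (hf' : DifferentiableAt 𝕜 (deriv f) x) (hx : f x ≠ 0) :
    deriv (logDeriv f) x + logDeriv f x ^ 2 = deriv (deriv f) x / f x := by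
  rw [logDeriv, deriv_div hf' hf hx, Pi.div_apply]
  field_simp
  ring

theorem integral_logDeriv_eq_log_sub_log {f : ℝ → ℝ} {a b : ℝ}
    (hf : ∀ x ∈ Set.uIcc a b, DifferentiableAt ℝ f x) (hf0 : ∀ x ∈ Set.uIcc a b, f x ≠ 0)
    (hint : IntervalIntegrable (logDeriv f) MeasureTheory.volume a b) :
    ∫ x in a..b, logDeriv f x = log (f b) - log (f a) :=
  integral_eq_sub_of_hasDerivAt (fun x hx => (hf x hx).hasDerivAt.log (hf0 x hx)) hint

theorem Function.Periodic.integral_logDeriv_eq_zero {f : ℝ → ℝ} {c : ℝ} (h : Periodic f c)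
    (hf : Differentiable ℝ f) (hf' : Continuous (_root_.deriv f)) (hf0 : ∀ x, f x ≠ 0) :
    ∫ x in (0 : ℝ)..c, _root_.logDeriv f x = 0 := by
  rw [integral_logDeriv_eq_log_sub_log (fun x _ => hf x) (fun x _ => hf0 x)
    ((hf'.div hf.continuous hf0).intervalIntegrable 0 c), h.eq, sub_self]

theorem stmt_1_general (T : ℝ) (hT : 0 < T) (f : ℝ → ℝ) (α : ℝ) (y : ℝ → ℝ)
    (hy1 : Differentiable ℝ y) (hy2 : Differentiable ℝ (deriv y))
    (hyper : ∀ t, y (t + T) = y t) (hypos : ∀ t, 0 < y t)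
    (heq : ∀ t, -deriv (deriv y) t - 2 * α * deriv y t - α ^ 2 * y t = -f t * y t)
    (γ : ℝ → ℝ) (hγ : ∀ t, γ t = α + deriv y t / y t) :
    Differentiable ℝ γ ∧ (∀ t, γ (t + T) = γ t) ∧
    (∀ t, deriv γ t + γ t ^ 2 = f t) ∧
    (1 / T) * (∫ s in (0:ℝ)..T, γ s) = α := by
  have hper : Periodic y T := hyper
  have hy0 (t : ℝ) : y t ≠ 0 := (hypos t).ne'
  obtain rfl : γ = fun t => α + logDeriv y t := funext hγ
  have hL : Differentiable ℝ (logDeriv y) := hy2.div hy1 hy0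
  refine ⟨(differentiable_const α).add hL, fun t => congrArg (α + ·) (hper.logDeriv t),
    fun t => ?_, ?_⟩
  · have hyt := hy0 t
    rw [deriv_const_add, add_sq, ← add_assoc, add_right_comm,
      deriv_logDeriv_add_sq (hy1 t) (hy2 t) hyt, logDeriv_apply]
    field_simp
    linarith [heq t]
  · rw [integral_add intervalIntegrable_const (hL.continuous.intervalIntegrable 0 T),
      hper.integral_logDeriv_eq_zero hy1 hy2.continuous hy0, integral_const, sub_zero,
      smul_eq_mul, add_zero]
    field_simp

/-- Converse direction: from a positive `T`-periodic twice differentiable solution `y` of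
`−y'' − 2α y' − α² y = −f y`, the function `γ = α + y'/y` is a differentiable `T`-periodic
solution of the Riccati equation `γ' + γ² = f`, with average `α` over a period. -/
theorem stmt_1 (T : ℝ) (hT : 0 < T) (f : ℝ → ℝ) (α : ℝ) (y : ℝ → ℝ)
    (hf : Continuous f) (hfper : ∀ t, f (t + T) = f t)
    (hy1 : Differentiable ℝ y) (hy2 : Differentiable ℝ (deriv y))
    (hyper : ∀ t, y (t + T) = y t) (hypos : ∀ t, 0 < y t)
    (heq : ∀ t, -deriv (deriv y) t - 2 * α * deriv y t - α ^ 2 * y t = -f t * y t)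
    (γ : ℝ → ℝ) (hγ : ∀ t, γ t = α + deriv y t / y t) :
    Differentiable ℝ γ ∧ (∀ t, γ (t + T) = γ t) ∧
    (∀ t, deriv γ t + γ t ^ 2 = f t) ∧
    (1 / T) * (∫ s in (0:ℝ)..T, γ s) = α :=
  stmt_1_general T hT f α y hy1 hy2 hyper hypos heq γ hγ
end

section
/- Let T > 0 and let f : ℝ → ℝ be continuous, T-periodic, with f(t) ≥ 0 for all t and f(t₀) > 0 for some t₀. If γ₁ and γ₂ are two differentiable T-periodic solutions of the Riccati equation γ' + γ² = f that are not identical (i.e. γ₁(s) ≠ γ₂(s) for some s ∈ ℝ), then ∫₀ᵀ γ₁(s) ds = −∫₀ᵀ γ₂(s) ds and ∫₀ᵀ γ₁(s) ds ≠ 0. -/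
/-!
With `w = γ₁ - γ₂`, subtracting the two Riccati equations gives the linear equation
`w' = -(γ₁ + γ₂) w`, so `w(t) · exp (∫ₛᵗ (γ₁ + γ₂))` is constant. Comparing `t = s` and
`t = s + T` at a point `s` where `w s ≠ 0` forces `∫ (γ₁ + γ₂) = 0` over a period.

If `∫ γ₁` vanished over a period, then `u = exp (∫_{t₀}^t γ₁)` would be `T`-periodic and
`(γ₁ u)' = (γ₁' + γ₁²) u = f u`, so `∫_{t₀}^{t₀+T} f u = 0`, although `f u ≥ 0` is continuous
and positive at `t₀`.
-/

open MeasureTheory intervalIntegral Real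

lemma mul_exp_integral_eq_of_hasDerivAt {a w : ℝ → ℝ} (ha : Continuous a)
    (hw : ∀ t, HasDerivAt w (-(a t * w t)) t) (x y : ℝ) :
    w y * exp (∫ s in x..y, a s) = w x := by
  have hconst : ∀ t, HasDerivAt (fun t => w t * exp (∫ s in x..t, a s)) 0 t :=
    fun t => ((hw t).fun_mul (ha.integral_hasStrictDerivAt x t).hasDerivAt.exp).congr_deriv
      (by ring)
  simpa using is_const_of_deriv_eq_zero (fun t => (hconst t).differentiableAt)
    (fun t => (hconst t).deriv) y x

section Riccati

variable {f γ γ₁ γ₂ : ℝ → ℝ} {T : ℝ}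

lemma hasDerivAt_of_riccati (hd : Differentiable ℝ γ) (hr : ∀ t, deriv γ t + γ t ^ 2 = f t)
    (t : ℝ) : HasDerivAt γ (f t - γ t ^ 2) t := by
  rw [← hr t, add_sub_cancel_right]
  exact (hd t).hasDerivAt

lemma continuous_of_riccati (hγ : ∀ t, HasDerivAt γ (f t - γ t ^ 2) t) : Continuous γ :=
  continuous_iff_continuousAt.2 fun t => (hγ t).continuousAt

lemma hasDerivAt_sub_of_riccati (h₁ : ∀ t, HasDerivAt γ₁ (f t - γ₁ t ^ 2) t)
    (h₂ : ∀ t, HasDerivAt γ₂ (f t - γ₂ t ^ 2) t) (t : ℝ) :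
    HasDerivAt (fun t => γ₁ t - γ₂ t) (-((γ₁ t + γ₂ t) * (γ₁ t - γ₂ t))) t :=
  ((h₁ t).fun_sub (h₂ t)).congr_deriv (by ring)

theorem integral_add_eq_zero_of_riccati (h₁ : ∀ t, HasDerivAt γ₁ (f t - γ₁ t ^ 2) t)
    (h₂ : ∀ t, HasDerivAt γ₂ (f t - γ₂ t ^ 2) t) (h₁p : Function.Periodic γ₁ T)
    (h₂p : Function.Periodic γ₂ T) {s : ℝ} (hs : γ₁ s ≠ γ₂ s) :
    ∫ t in (0:ℝ)..T, (γ₁ t + γ₂ t) = 0 := by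
  have key := mul_exp_integral_eq_of_hasDerivAt
    ((continuous_of_riccati h₁).add (continuous_of_riccati h₂))
    (hasDerivAt_sub_of_riccati h₁ h₂) s (s + T)
  rw [h₁p s, h₂p s, mul_eq_left₀ (sub_ne_zero.2 hs), exp_eq_one_iff] at key
  have hshift := (h₁p.add h₂p).intervalIntegral_add_eq s 0
  simp only [Pi.add_apply, zero_add] at hshift key
  rwa [← hshift]

theorem integral_ne_zero_of_riccati (hT : 0 < T) (hf : Continuous f) (hfnn : ∀ t, 0 ≤ f t)
    {t₀ : ℝ} (hfpos : 0 < f t₀) (hγ : ∀ t, HasDerivAt γ (f t - γ t ^ 2) t)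
    (hγp : Function.Periodic γ T) :
    ∫ t in (0:ℝ)..T, γ t ≠ 0 := by
  intro hzero
  have hγc := continuous_of_riccati hγ
  set u : ℝ → ℝ := fun t => exp (∫ s in t₀..t, γ s)
  have hu : ∀ t, HasDerivAt u (γ t * u t) t := fun t =>
    (hγc.integral_hasStrictDerivAt t₀ t).hasDerivAt.exp.congr_deriv (mul_comm _ _)
  have hγu : ∀ t, HasDerivAt (fun t => γ t * u t) (f t * u t) t := fun t =>
    ((hγ t).fun_mul (hu t)).congr_deriv (by ring)
  have hu_period : u (t₀ + T) = u t₀ := by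
    simp only [u, hγp.intervalIntegral_add_eq t₀ 0, zero_add, hzero, integral_same]
  have hfu : Continuous fun t => f t * u t :=
    hf.mul (continuous_iff_continuousAt.2 fun t => (hu t).continuousAt)
  have hint : ∫ t in t₀..t₀ + T, f t * u t = 0 := by
    rw [integral_eq_sub_of_hasDerivAt (fun t _ => hγu t) (hfu.intervalIntegrable _ _),
      hγp t₀, hu_period, sub_self]
  have hpos : 0 < ∫ t in t₀..t₀ + T, f t * u t :=
    integral_pos (by linarith) hfu.continuousOn
      (fun t _ => mul_nonneg (hfnn t) (exp_pos _).le)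
      ⟨t₀, Set.left_mem_Icc.2 (by linarith), mul_pos hfpos (exp_pos _)⟩
  exact hpos.ne' hint

end Riccati

theorem stmt_2_general (T : ℝ) (hT : 0 < T) (f : ℝ → ℝ)
    (hf : Continuous f)
    (hfnn : ∀ t, 0 ≤ f t) (t₀ : ℝ) (hfpos : 0 < f t₀)
    (γ₁ γ₂ : ℝ → ℝ)
    (h1d : Differentiable ℝ γ₁) (h1p : ∀ t, γ₁ (t + T) = γ₁ t)
    (h1r : ∀ t, deriv γ₁ t + γ₁ t ^ 2 = f t)
    (h2d : Differentiable ℝ γ₂) (h2p : ∀ t, γ₂ (t + T) = γ₂ t)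
    (h2r : ∀ t, deriv γ₂ t + γ₂ t ^ 2 = f t)
    (hne : ∃ s, γ₁ s ≠ γ₂ s) :
    (∫ s in (0:ℝ)..T, γ₁ s) = -(∫ s in (0:ℝ)..T, γ₂ s) ∧
    (∫ s in (0:ℝ)..T, γ₁ s) ≠ 0 := by
  have h₁ := hasDerivAt_of_riccati h1d h1r
  have h₂ := hasDerivAt_of_riccati h2d h2r
  obtain ⟨s, hs⟩ := hne
  have hsum := integral_add_eq_zero_of_riccati h₁ h₂ h1p h2p hs
  rw [integral_add ((continuous_of_riccati h₁).intervalIntegrable _ _)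
    ((continuous_of_riccati h₂).intervalIntegrable _ _)] at hsum
  exact ⟨eq_neg_of_add_eq_zero_left hsum, integral_ne_zero_of_riccati hT hf hfnn hfpos h₁ h1p⟩

/-- Two distinct `T`-periodic solutions of the Riccati equation `γ' + γ² = f`
(with `f ≥ 0`, `f ≢ 0`) have opposite, nonzero integrals over a period. -/
theorem stmt_2 (T : ℝ) (hT : 0 < T) (f : ℝ → ℝ)
    (hf : Continuous f) (hfper : ∀ t, f (t + T) = f t)
    (hfnn : ∀ t, 0 ≤ f t) (t₀ : ℝ) (hfpos : 0 < f t₀)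
    (γ₁ γ₂ : ℝ → ℝ)
    (h1d : Differentiable ℝ γ₁) (h1p : ∀ t, γ₁ (t + T) = γ₁ t)
    (h1r : ∀ t, deriv γ₁ t + γ₁ t ^ 2 = f t)
    (h2d : Differentiable ℝ γ₂) (h2p : ∀ t, γ₂ (t + T) = γ₂ t)
    (h2r : ∀ t, deriv γ₂ t + γ₂ t ^ 2 = f t)
    (hne : ∃ s, γ₁ s ≠ γ₂ s) :
    (∫ s in (0:ℝ)..T, γ₁ s) = -(∫ s in (0:ℝ)..T, γ₂ s) ∧
    (∫ s in (0:ℝ)..T, γ₁ s) ≠ 0 :=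
  stmt_2_general T hT f hf hfnn t₀ hfpos γ₁ γ₂ h1d h1p h1r h2d h2p h2r hne
end

section
/- Let T > 0 and let f : ℝ → ℝ be continuous, T-periodic, with f(t) ≥ 0 for all t and f(t₀) > 0 for some t₀. Then every differentiable T-periodic solution γ of the Riccati equation γ' + γ² = f satisfies ∫₀ᵀ γ(s) ds ≠ 0. -/
/-!
Suppose `∫₀ᵀ γ = 0`. Then `F t = ∫₀ᵗ γ` is `T`-periodic, hence so is `y = exp ∘ F`, a positive
solution of `y'' = f y` with `y' = γ y`. Integrating `y''` over a period gives
`∫₀ᵀ f y = y'(T) - y'(0) = 0`, which is impossible since `f y ≥ 0` is continuous and positive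
at `t₀`.
-/

open Real

namespace Function.Periodic

variable {T : ℝ}

theorem intervalIntegral_periodic_of_integral_eq_zero_s3 {γ : ℝ → ℝ} (hγ : Periodic γ T)
    (hint : ∀ a b, IntervalIntegrable γ MeasureTheory.volume a b)
    (hzero : ∫ s in (0 : ℝ)..T, γ s = 0) :
    Periodic (fun t => ∫ s in (0 : ℝ)..t, γ s) T := fun t => by
  simpa [hzero] using hγ.intervalIntegral_add_eq_add 0 t hint

theorem intervalIntegral_eq_zero_of_hasDerivAt {g φ : ℝ → ℝ} (hg : Periodic g T)
    (hderiv : ∀ t, HasDerivAt g (φ t) t) (hφ : IntervalIntegrable φ MeasureTheory.volume 0 T) :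
    ∫ s in (0 : ℝ)..T, φ s = 0 := by
  rw [intervalIntegral.integral_eq_sub_of_hasDerivAt (fun t _ => hderiv t) hφ,
    ← zero_add T, hg 0, sub_self]

theorem intervalIntegral_pos {φ : ℝ → ℝ} (hφ : Periodic φ T) (hT : 0 < T) (hc : Continuous φ)
    (hnn : ∀ t, 0 ≤ φ t) {t₀ : ℝ} (hpos : 0 < φ t₀) (a : ℝ) :
    0 < ∫ s in a..a + T, φ s := by
  rw [hφ.intervalIntegral_add_eq a (t₀ - T / 2)]
  refine intervalIntegral.integral_pos (by linarith) hc.continuousOn (fun t _ => hnn t)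
    ⟨t₀, ⟨by linarith, by linarith⟩, hpos⟩

end Function.Periodic

theorem hasDerivAt_mul_exp_of_hasDerivAt {γ F : ℝ → ℝ} {t : ℝ} (hγ : DifferentiableAt ℝ γ t)
    (hF : HasDerivAt F (γ t) t) :
    HasDerivAt (fun s => γ s * exp (F s)) ((deriv γ t + γ t ^ 2) * exp (F t)) t :=
  (hγ.hasDerivAt.mul hF.exp).congr_deriv (by ring)

/-- Every `T`-periodic solution of the Riccati equation `γ' + γ² = f`
(with `f ≥ 0`, `f ≢ 0`) has nonzero integral over a period. -/
theorem stmt_3 (T : ℝ) (hT : 0 < T) (f : ℝ → ℝ)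
    (hf : Continuous f) (hfper : ∀ t, f (t + T) = f t)
    (hfnn : ∀ t, 0 ≤ f t) (t₀ : ℝ) (hfpos : 0 < f t₀)
    (γ : ℝ → ℝ)
    (hd : Differentiable ℝ γ) (hp : ∀ t, γ (t + T) = γ t)
    (hr : ∀ t, deriv γ t + γ t ^ 2 = f t) :
    (∫ s in (0:ℝ)..T, γ s) ≠ 0 := by
  intro hzero
  have hγc : Continuous γ := hd.continuous
  set F : ℝ → ℝ := fun t => ∫ s in (0:ℝ)..t, γ s
  have hF : ∀ t, HasDerivAt F (γ t) t := fun t =>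
    (hγc.integral_hasStrictDerivAt 0 t).hasDerivAt
  have hFper : Function.Periodic F T :=
    Function.Periodic.intervalIntegral_periodic_of_integral_eq_zero_s3 hp
      hγc.intervalIntegrable hzero
  have hfyc : Continuous fun t => f t * exp (F t) :=
    hf.mul (continuous_exp.comp (intervalIntegral.continuous_primitive hγc.intervalIntegrable 0))
  have hfy_zero : ∫ s in (0:ℝ)..T, f s * exp (F s) = 0 := by
    refine Function.Periodic.intervalIntegral_eq_zero_of_hasDerivAt (g := fun t => γ t * exp (F t))
      (fun t => by simp only [hp t, hFper t]) (fun t => ?_) (hfyc.intervalIntegrable 0 T)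
    simpa only [hr] using hasDerivAt_mul_exp_of_hasDerivAt (hd t) (hF t)
  have hfy_pos := Function.Periodic.intervalIntegral_pos (fun t => by simp only [hfper t, hFper t])
    hT hfyc (fun t => mul_nonneg (hfnn t) (exp_pos _).le) (mul_pos hfpos (exp_pos (F t₀))) 0
  rw [zero_add, hfy_zero] at hfy_pos
  exact hfy_pos.false
end

section
/- Let T > 0 and let f : ℝ → ℝ be continuous, T-periodic, with f(t) ≥ 0 for all t and f(t₀) > 0 for some t₀. Let γ be a differentiable T-periodic solution of the Riccati equation γ' + γ² = f. If ∫₀ᵀ γ(s) ds > 0 then γ(t) > 0 for all t ∈ ℝ, and if ∫₀ᵀ γ(s) ds < 0 then γ(t) < 0 for all t ∈ ℝ. -/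
/-!
Multiplying by the integrating factor `exp (∫ₐᵗ γ)` linearises the Riccati equation:
`(γ · exp (∫ₐᵗ γ))' = (γ' + γ²) · exp (∫ₐᵗ γ) = f · exp (∫ₐᵗ γ) ≥ 0`. If `γ a = 0`, this monotone
function vanishes at `a` and, by periodicity, at `a + T`, hence on the whole period; so `γ ≡ 0`
and `f = γ' + γ² ≡ 0`, contradicting `f t₀ > 0`. Thus the continuous function `γ` never vanishes,
has constant sign, and that sign is the sign of its integral over a period.
-/

open Set Real intervalIntegral

theorem Continuous.forall_pos_or_forall_neg {X : Type*} [TopologicalSpace X] [PreconnectedSpace X]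
    {g : X → ℝ} (hg : Continuous g) (hne : ∀ x, g x ≠ 0) :
    (∀ x, 0 < g x) ∨ (∀ x, g x < 0) := by
  refine or_iff_not_imp_left.2 fun hpos y => ?_
  simp only [not_forall, not_lt] at hpos
  obtain ⟨x, hx⟩ := hpos
  by_contra! hy
  obtain ⟨z, hz⟩ := intermediate_value_univ x y hg ⟨hx, hy⟩
  exact hne z hz

theorem hasDerivAt_mul_exp_integral {γ : ℝ → ℝ} (hγ : Differentiable ℝ γ) (a t : ℝ) :
    HasDerivAt (fun t => γ t * exp (∫ s in a..t, γ s))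
      ((deriv γ t + γ t ^ 2) * exp (∫ s in a..t, γ s)) t := by
  have hc := hγ.continuous
  have hG : HasDerivAt (fun t => ∫ s in a..t, γ s) (γ t) t :=
    intervalIntegral.integral_hasDerivAt_right (hc.intervalIntegrable a t)
      hc.aestronglyMeasurable.stronglyMeasurableAtFilter hc.continuousAt
  exact ((hγ t).hasDerivAt.mul hG.exp).congr_deriv (by ring)

theorem monotone_mul_exp_integral {γ : ℝ → ℝ} (hγ : Differentiable ℝ γ)
    (hnn : ∀ t, 0 ≤ deriv γ t + γ t ^ 2) (a : ℝ) :
    Monotone fun t => γ t * exp (∫ s in a..t, γ s) :=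
  monotone_of_deriv_nonneg (fun t => (hasDerivAt_mul_exp_integral hγ a t).differentiableAt)
    fun t => (hasDerivAt_mul_exp_integral hγ a t).deriv ▸
      mul_nonneg (hnn t) (exp_pos _).le

theorem Function.Periodic.eq_zero_of_eqOn_Icc {g : ℝ → ℝ} {T a : ℝ} (hg : Function.Periodic g T)
    (hT : 0 < T) (h0 : EqOn g 0 (Icc a (a + T))) : g = 0 := by
  funext t
  obtain ⟨y, hy, hgy⟩ := hg.exists_mem_Ico hT t a
  rw [hgy, h0 ⟨hy.1, hy.2.le⟩, Pi.zero_apply, Pi.zero_apply]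

theorem riccati_periodic_ne_zero {T : ℝ} (hT : 0 < T) {f γ : ℝ → ℝ} (hfnn : ∀ t, 0 ≤ f t)
    {t₀ : ℝ} (hfpos : 0 < f t₀) (hd : Differentiable ℝ γ) (hp : Function.Periodic γ T)
    (hr : ∀ t, deriv γ t + γ t ^ 2 = f t) (a : ℝ) : γ a ≠ 0 := by
  intro ha
  have hmono := monotone_mul_exp_integral hd (fun t => hr t ▸ hfnn t) a
  have hzero : EqOn γ 0 (Icc a (a + T)) := fun t ht => by
    have hle : γ t * exp (∫ s in a..t, γ s) ≤ 0 := by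
      simpa [hp a, ha] using hmono ht.2
    have hge : 0 ≤ γ t * exp (∫ s in a..t, γ s) := by
      simpa [ha] using hmono ht.1
    simpa [(exp_pos _).ne'] using le_antisymm hle hge
  have hγ : γ = 0 := hp.eq_zero_of_eqOn_Icc hT hzero
  have hf₀ : f t₀ = 0 := by simpa [hγ] using (hr t₀).symm
  exact hfpos.ne' hf₀

theorem stmt_4_general (T : ℝ) (hT : 0 < T) (f : ℝ → ℝ)
    (hfnn : ∀ t, 0 ≤ f t) (t₀ : ℝ) (hfpos : 0 < f t₀)
    (γ : ℝ → ℝ)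
    (hd : Differentiable ℝ γ) (hp : ∀ t, γ (t + T) = γ t)
    (hr : ∀ t, deriv γ t + γ t ^ 2 = f t) :
    ((0 < ∫ s in (0:ℝ)..T, γ s) → ∀ t, 0 < γ t) ∧
    ((∫ s in (0:ℝ)..T, γ s) < 0 → ∀ t, γ t < 0) := by
  have hint := hd.continuous.intervalIntegrable (μ := MeasureTheory.volume) 0 T
  rcases hd.continuous.forall_pos_or_forall_neg
      (riccati_periodic_ne_zero hT hfnn hfpos hd hp hr) with hpos | hneg
  · have := intervalIntegral_pos_of_pos hint hpos hT
    exact ⟨fun _ => hpos, fun h => absurd h this.not_gt⟩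
  · have := intervalIntegral_pos_of_pos hint.neg (fun t => neg_pos.2 (hneg t)) hT
    simp only [Pi.neg_apply, integral_neg, neg_pos] at this
    exact ⟨fun h => absurd h this.not_gt, fun _ => hneg⟩

/-- Sign of periodic Riccati solutions according to the sign of their average:
if the integral of `γ` over a period is positive then `γ > 0` everywhere, and
if it is negative then `γ < 0` everywhere. -/
theorem stmt_4 (T : ℝ) (hT : 0 < T) (f : ℝ → ℝ)
    (hf : Continuous f) (hfper : ∀ t, f (t + T) = f t)
    (hfnn : ∀ t, 0 ≤ f t) (t₀ : ℝ) (hfpos : 0 < f t₀)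
    (γ : ℝ → ℝ)
    (hd : Differentiable ℝ γ) (hp : ∀ t, γ (t + T) = γ t)
    (hr : ∀ t, deriv γ t + γ t ^ 2 = f t) :
    ((0 < ∫ s in (0:ℝ)..T, γ s) → ∀ t, 0 < γ t) ∧
    ((∫ s in (0:ℝ)..T, γ s) < 0 → ∀ t, γ t < 0) :=
  stmt_4_general T hT f hfnn t₀ hfpos γ hd hp hr
end

section
/- Let T > 0 and let f : ℝ → ℝ be continuous, T-periodic, with f(t) ≥ 0 for all t and f(t₀) > 0 for some t₀. If γ₁ and γ₂ are differentiable T-periodic solutions of the Riccati equation γ' + γ² = f with γ₁(t) ≥ 0 and γ₂(t) ≥ 0 for all t, then γ₁ = γ₂. Likewise, if γ₁(t) ≤ 0 and γ₂(t) ≤ 0 for all t, then γ₁ = γ₂. -/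
/-!
The difference `δ = γ₁ - γ₂` of two solutions solves the linear equation `δ' = -(γ₁ + γ₂) δ`,
so `δ t · exp (∫₀ᵗ (γ₁ + γ₂)) = δ 0`. If the solutions differ, `δ` never vanishes, so two
nonnegative solutions have `γ₁ + γ₂ > 0` everywhere and the integrating factor grows strictly
over a period, which is incompatible with `δ (T) = δ 0 ≠ 0`. The nonpositive case follows by
the reflection `γ ↦ -γ (-·)`, which maps solutions for `f` to solutions for `f (-·)`.
-/

open Function Real

section LinearODE

variable {δ g : ℝ → ℝ}

theorem mul_exp_integral_eq_of_hasDerivAt_s6 (hg : Continuous g)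
    (hδ : ∀ t, HasDerivAt δ (-g t * δ t) t) (t : ℝ) :
    δ t * exp (∫ s in (0 : ℝ)..t, g s) = δ 0 := by
  have hG : ∀ t, HasDerivAt (fun t => ∫ s in (0 : ℝ)..t, g s) (g t) t := fun t =>
    intervalIntegral.integral_hasDerivAt_right (hg.intervalIntegrable _ _)
      hg.aestronglyMeasurable.stronglyMeasurableAtFilter hg.continuousAt
  have hderiv : ∀ t, HasDerivAt (fun t => δ t * exp (∫ s in (0 : ℝ)..t, g s)) 0 t :=
    fun t => ((hδ t).mul (hG t).exp).congr_deriv (by ring)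
  simpa using is_const_of_deriv_eq_zero (fun t => (hderiv t).differentiableAt)
    (fun t => (hderiv t).deriv) t 0

theorem eq_zero_of_hasDerivAt_of_apply_eq_zero (hg : Continuous g)
    (hδ : ∀ t, HasDerivAt δ (-g t * δ t) t) {t₁ : ℝ} (h : δ t₁ = 0) : δ = 0 := by
  have hδ0 : δ 0 = 0 := by
    rw [← mul_exp_integral_eq_of_hasDerivAt_s6 hg hδ t₁, h, zero_mul]
  funext t
  simpa [hδ0, exp_ne_zero] using mul_exp_integral_eq_of_hasDerivAt_s6 hg hδ t

theorem integral_eq_zero_of_periodic_of_hasDerivAt (hg : Continuous g)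
    (hδ : ∀ t, HasDerivAt δ (-g t * δ t) t) {T : ℝ} (hp : Periodic δ T) (h0 : δ 0 ≠ 0) :
    ∫ s in (0 : ℝ)..T, g s = 0 := by
  have h := mul_exp_integral_eq_of_hasDerivAt_s6 hg hδ T
  rw [hp.eq] at h
  simpa using mul_eq_left₀ h0 |>.mp h

end LinearODE

section Riccati

variable {f γ γ₁ γ₂ : ℝ → ℝ}

theorem Riccati.hasDerivAt_sub (h₁ : ∀ t, HasDerivAt γ₁ (f t - γ₁ t ^ 2) t)
    (h₂ : ∀ t, HasDerivAt γ₂ (f t - γ₂ t ^ 2) t) (t : ℝ) :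
    HasDerivAt (γ₁ - γ₂) (-(γ₁ t + γ₂ t) * (γ₁ - γ₂) t) t :=
  ((h₁ t).sub (h₂ t)).congr_deriv (by simp only [Pi.sub_apply]; ring)

theorem Riccati.eq_of_periodic_of_nonneg {T : ℝ} (hT : 0 < T)
    (h₁ : ∀ t, HasDerivAt γ₁ (f t - γ₁ t ^ 2) t) (h₂ : ∀ t, HasDerivAt γ₂ (f t - γ₂ t ^ 2) t)
    (hp₁ : Periodic γ₁ T) (hp₂ : Periodic γ₂ T)
    (hn₁ : ∀ t, 0 ≤ γ₁ t) (hn₂ : ∀ t, 0 ≤ γ₂ t) : γ₁ = γ₂ := by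
  have hg : Continuous (γ₁ + γ₂) :=
    (continuous_iff_continuousAt.2 fun t => (h₁ t).continuousAt).add
      (continuous_iff_continuousAt.2 fun t => (h₂ t).continuousAt)
  have hδ := Riccati.hasDerivAt_sub h₁ h₂
  by_contra hne
  have hδne : ∀ t, (γ₁ - γ₂) t ≠ 0 := fun t ht =>
    hne (sub_eq_zero.1 (eq_zero_of_hasDerivAt_of_apply_eq_zero hg hδ ht))
  have hpos : ∀ t, 0 < (γ₁ + γ₂) t := by
    intro t
    rcases (sub_ne_zero.1 (hδne t)).lt_or_gt with h | h
    · simpa using add_pos_of_nonneg_of_pos (hn₁ t) ((hn₁ t).trans_lt h)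
    · simpa using add_pos_of_pos_of_nonneg ((hn₂ t).trans_lt h) (hn₂ t)
  have hint := integral_eq_zero_of_periodic_of_hasDerivAt hg hδ (hp₁.sub hp₂) (hδne 0)
  exact (intervalIntegral.intervalIntegral_pos_of_pos_on (hg.intervalIntegrable 0 T)
    (fun t _ => hpos t) hT).ne' hint

theorem Riccati.hasDerivAt_neg_comp_neg (h : ∀ t, HasDerivAt γ (f t - γ t ^ 2) t) (t : ℝ) :
    HasDerivAt (fun s => -γ (-s)) (f (-t) - (-γ (-t)) ^ 2) t :=
  ((h (-t)).comp t (hasDerivAt_neg t)).neg.congr_deriv (by ring)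

end Riccati

theorem stmt_6_general (T : ℝ) (hT : 0 < T) (f : ℝ → ℝ)
    (γ₁ γ₂ : ℝ → ℝ)
    (h1d : Differentiable ℝ γ₁) (h1p : ∀ t, γ₁ (t + T) = γ₁ t)
    (h1r : ∀ t, deriv γ₁ t + γ₁ t ^ 2 = f t)
    (h2d : Differentiable ℝ γ₂) (h2p : ∀ t, γ₂ (t + T) = γ₂ t)
    (h2r : ∀ t, deriv γ₂ t + γ₂ t ^ 2 = f t) :
    ((∀ t, 0 ≤ γ₁ t) → (∀ t, 0 ≤ γ₂ t) → γ₁ = γ₂) ∧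
    ((∀ t, γ₁ t ≤ 0) → (∀ t, γ₂ t ≤ 0) → γ₁ = γ₂) := by
  have h₁ : ∀ t, HasDerivAt γ₁ (f t - γ₁ t ^ 2) t := fun t => by
    rw [← h1r t, add_sub_cancel_right]; exact (h1d t).hasDerivAt
  have h₂ : ∀ t, HasDerivAt γ₂ (f t - γ₂ t ^ 2) t := fun t => by
    rw [← h2r t, add_sub_cancel_right]; exact (h2d t).hasDerivAt
  have reflect_periodic : ∀ γ : ℝ → ℝ, Periodic γ T → Periodic (fun s => -γ (-s)) T :=
    fun γ hp t => by simp only [neg_add, ← sub_eq_add_neg, hp.sub_eq]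
  refine ⟨Riccati.eq_of_periodic_of_nonneg hT h₁ h₂ h1p h2p, fun hn₁ hn₂ => ?_⟩
  have h := Riccati.eq_of_periodic_of_nonneg hT
    (Riccati.hasDerivAt_neg_comp_neg h₁) (Riccati.hasDerivAt_neg_comp_neg h₂)
    (reflect_periodic γ₁ h1p) (reflect_periodic γ₂ h2p)
    (fun t => neg_nonneg.2 (hn₁ (-t))) (fun t => neg_nonneg.2 (hn₂ (-t)))
  funext t
  simpa using congrFun h (-t)

/-- Uniqueness of nonnegative (resp. nonpositive) `T`-periodic solutions of the Riccati
equation `γ' + γ² = f` with `f ≥ 0`, `f ≢ 0`. -/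
theorem stmt_6 (T : ℝ) (hT : 0 < T) (f : ℝ → ℝ)
    (hf : Continuous f) (hfper : ∀ t, f (t + T) = f t)
    (hfnn : ∀ t, 0 ≤ f t) (t₀ : ℝ) (hfpos : 0 < f t₀)
    (γ₁ γ₂ : ℝ → ℝ)
    (h1d : Differentiable ℝ γ₁) (h1p : ∀ t, γ₁ (t + T) = γ₁ t)
    (h1r : ∀ t, deriv γ₁ t + γ₁ t ^ 2 = f t)
    (h2d : Differentiable ℝ γ₂) (h2p : ∀ t, γ₂ (t + T) = γ₂ t)
    (h2r : ∀ t, deriv γ₂ t + γ₂ t ^ 2 = f t) :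
    ((∀ t, 0 ≤ γ₁ t) → (∀ t, 0 ≤ γ₂ t) → γ₁ = γ₂) ∧
    ((∀ t, γ₁ t ≤ 0) → (∀ t, γ₂ t ≤ 0) → γ₁ = γ₂) :=
  stmt_6_general T hT f γ₁ γ₂ h1d h1p h1r h2d h2p h2r
end

section
/- Let T > 0 and let f : ℝ → ℝ be continuous, T-periodic, with f(t) ≥ 0 for all t and f(t₀) > 0 for some t₀. Then the Riccati equation γ' + γ² = f has at most two differentiable T-periodic solutions: if γ₁, γ₂, γ₃ are differentiable T-periodic functions each satisfying γᵢ'(t) + γᵢ(t)² = f(t) for all t, then γ₁ = γ₂ or γ₁ = γ₃ or γ₂ = γ₃. -/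
/-!
The difference `u = γ - δ` of two solutions of `γ' + γ² = f` solves the linear equation
`u' = -(γ + δ) u`, so `u t = u 0 · exp (-∫₀ᵗ (γ + δ))`. If `γ ≠ δ`, then `u` never vanishes and has
constant sign; periodicity of `u` forces `∫₀ᵀ (γ + δ) = 0`, while `∫₀ᵀ (γ - δ) ≠ 0`. Hence two distinct
periodic solutions have opposite, distinct averages, and three pairwise distinct ones would all have
average zero.
-/

open Function intervalIntegral Real

section LinearODE

variable {g u : ℝ → ℝ}

theorem eq_mul_exp_neg_integral_of_hasDerivAt (hg : Continuous g)
    (hu : ∀ t, HasDerivAt u (-g t * u t) t) (a t : ℝ) :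
    u t = u a * exp (-∫ s in a..t, g s) := by
  have hG : ∀ t, HasDerivAt (fun t => ∫ s in a..t, g s) (g t) t := fun t =>
    integral_hasDerivAt_right (hg.intervalIntegrable a t) (hg.stronglyMeasurableAtFilter _ _)
      hg.continuousAt
  have hv : ∀ t, HasDerivAt (fun t => u t * exp (∫ s in a..t, g s)) 0 t := fun t => by
    refine ((hu t).mul (hG t).exp).congr_deriv ?_
    ring
  have hconst : u t * exp (∫ s in a..t, g s) = u a := by
    simpa using is_const_of_deriv_eq_zero (fun x => (hv x).differentiableAt)
      (fun x => (hv x).deriv) t a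
  rw [exp_neg, ← hconst]
  field_simp

theorem apply_ne_zero_of_hasDerivAt (hg : Continuous g)
    (hu : ∀ t, HasDerivAt u (-g t * u t) t) (hu0 : u ≠ 0) (a : ℝ) : u a ≠ 0 := by
  intro ha
  refine hu0 (funext fun t => ?_)
  rw [eq_mul_exp_neg_integral_of_hasDerivAt hg hu a t, ha, zero_mul, Pi.zero_apply]

theorem integral_eq_zero_of_hasDerivAt_of_apply_eq (hg : Continuous g)
    (hu : ∀ t, HasDerivAt u (-g t * u t) t) {a b : ℝ} (hua : u a ≠ 0) (hab : u b = u a) :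
    ∫ s in a..b, g s = 0 := by
  rw [eq_mul_exp_neg_integral_of_hasDerivAt hg hu a b, mul_eq_left₀ hua, exp_eq_one_iff] at hab
  exact neg_eq_zero.mp hab

theorem integral_ne_zero_of_hasDerivAt (hg : Continuous g)
    (hu : ∀ t, HasDerivAt u (-g t * u t) t) {a b : ℝ} (hua : u a ≠ 0) (hab : a < b) :
    ∫ s in a..b, u s ≠ 0 := by
  have hexp : Continuous fun t => exp (-∫ s in a..t, g s) :=
    (continuous_primitive (fun _ _ => hg.intervalIntegrable _ _) a).neg.rexp
  rw [integral_congr fun t _ => eq_mul_exp_neg_integral_of_hasDerivAt hg hu a t,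
    integral_const_mul]
  exact mul_ne_zero hua
    (intervalIntegral_pos_of_pos (hexp.intervalIntegrable a b) (fun _ => exp_pos _) hab).ne'

end LinearODE

section Riccati

variable {T : ℝ} {f γ δ : ℝ → ℝ}

theorem hasDerivAt_sub_of_riccati_s7 (hγ : Differentiable ℝ γ) (hγf : ∀ t, deriv γ t + γ t ^ 2 = f t)
    (hδ : Differentiable ℝ δ) (hδf : ∀ t, deriv δ t + δ t ^ 2 = f t) (t : ℝ) :
    HasDerivAt (γ - δ) (-(γ + δ) t * (γ - δ) t) t := by
  refine ((hγ t).hasDerivAt.sub (hδ t).hasDerivAt).congr_deriv ?_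
  simp only [Pi.add_apply, Pi.sub_apply]
  linarith [hγf t, hδf t]

theorem riccati_integral_add_eq_zero (hγ : Differentiable ℝ γ) (hγT : Periodic γ T)
    (hγf : ∀ t, deriv γ t + γ t ^ 2 = f t) (hδ : Differentiable ℝ δ) (hδT : Periodic δ T)
    (hδf : ∀ t, deriv δ t + δ t ^ 2 = f t) (hγδ : γ ≠ δ) :
    (∫ t in (0 : ℝ)..T, γ t) + ∫ t in (0 : ℝ)..T, δ t = 0 := by
  have hu := hasDerivAt_sub_of_riccati_s7 hγ hγf hδ hδf
  have hg : Continuous (γ + δ) := hγ.continuous.add hδ.continuous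
  rw [← integral_add (hγ.continuous.intervalIntegrable 0 T) (hδ.continuous.intervalIntegrable 0 T)]
  exact integral_eq_zero_of_hasDerivAt_of_apply_eq hg hu
    (apply_ne_zero_of_hasDerivAt hg hu (sub_ne_zero.mpr hγδ) 0) (by simpa using (hγT.sub hδT) 0)

theorem riccati_integral_ne (hT : 0 < T) (hγ : Differentiable ℝ γ)
    (hγf : ∀ t, deriv γ t + γ t ^ 2 = f t) (hδ : Differentiable ℝ δ)
    (hδf : ∀ t, deriv δ t + δ t ^ 2 = f t) (hγδ : γ ≠ δ) :
    ∫ t in (0 : ℝ)..T, γ t ≠ ∫ t in (0 : ℝ)..T, δ t := by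
  have hu := hasDerivAt_sub_of_riccati_s7 hγ hγf hδ hδf
  have hg : Continuous (γ + δ) := hγ.continuous.add hδ.continuous
  rw [Ne, ← sub_eq_zero,
    ← integral_sub (hγ.continuous.intervalIntegrable 0 T) (hδ.continuous.intervalIntegrable 0 T)]
  exact integral_ne_zero_of_hasDerivAt hg hu
    (apply_ne_zero_of_hasDerivAt hg hu (sub_ne_zero.mpr hγδ) 0) hT

end Riccati

theorem stmt_7_general (T : ℝ) (hT : 0 < T) (f : ℝ → ℝ)
    (γ₁ γ₂ γ₃ : ℝ → ℝ)
    (h1d : Differentiable ℝ γ₁) (h1p : ∀ t, γ₁ (t + T) = γ₁ t)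
    (h1r : ∀ t, deriv γ₁ t + γ₁ t ^ 2 = f t)
    (h2d : Differentiable ℝ γ₂) (h2p : ∀ t, γ₂ (t + T) = γ₂ t)
    (h2r : ∀ t, deriv γ₂ t + γ₂ t ^ 2 = f t)
    (h3d : Differentiable ℝ γ₃) (h3p : ∀ t, γ₃ (t + T) = γ₃ t)
    (h3r : ∀ t, deriv γ₃ t + γ₃ t ^ 2 = f t) :
    γ₁ = γ₂ ∨ γ₁ = γ₃ ∨ γ₂ = γ₃ := by
  by_contra! ⟨h12, h13, h23⟩
  have s12 := riccati_integral_add_eq_zero h1d h1p h1r h2d h2p h2r h12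
  have s13 := riccati_integral_add_eq_zero h1d h1p h1r h3d h3p h3r h13
  have s23 := riccati_integral_add_eq_zero h2d h2p h2r h3d h3p h3r h23
  exact riccati_integral_ne hT h1d h1r h2d h2r h12 (by linarith)

/-- The Riccati equation `γ' + γ² = f` with `f ≥ 0`, `f ≢ 0`, continuous and `T`-periodic,
has at most two differentiable `T`-periodic solutions. -/
theorem stmt_7 (T : ℝ) (hT : 0 < T) (f : ℝ → ℝ)
    (hf : Continuous f) (hfper : ∀ t, f (t + T) = f t)
    (hfnn : ∀ t, 0 ≤ f t) (t₀ : ℝ) (hfpos : 0 < f t₀)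
    (γ₁ γ₂ γ₃ : ℝ → ℝ)
    (h1d : Differentiable ℝ γ₁) (h1p : ∀ t, γ₁ (t + T) = γ₁ t)
    (h1r : ∀ t, deriv γ₁ t + γ₁ t ^ 2 = f t)
    (h2d : Differentiable ℝ γ₂) (h2p : ∀ t, γ₂ (t + T) = γ₂ t)
    (h2r : ∀ t, deriv γ₂ t + γ₂ t ^ 2 = f t)
    (h3d : Differentiable ℝ γ₃) (h3p : ∀ t, γ₃ (t + T) = γ₃ t)
    (h3r : ∀ t, deriv γ₃ t + γ₃ t ^ 2 = f t) :
    γ₁ = γ₂ ∨ γ₁ = γ₃ ∨ γ₂ = γ₃ :=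
  stmt_7_general T hT f γ₁ γ₂ γ₃ h1d h1p h1r h2d h2p h2r h3d h3p h3r
end

section
/- Let d ≥ 1, T > 0, let c : ℝ → ℝ be continuous and T-periodic, let A be a d×d real matrix, and let B : ℝ → (d×d real matrices) be differentiable, T-periodic, with each B(t) symmetric, satisfying B'(t)/2 + B(t)·B(t) = (c(t)/2)·A for all t ∈ ℝ. Set λ̄ := (1/T)∫₀ᵀ trace(B(s)) ds and β(t) := ∫₀ᵗ (λ̄ − trace(B(s))) ds, and define w : ℝ → (Fin d → ℝ) → ℝ by w(t,x) := exp(β(t) − (1/2)·xᵀB(t)x). Then w(t+T, x) = w(t, x) for all t and x, and for all (t,x): ∂w/∂t(t,x) − Σᵢ₌₁ᵈ ∂²w/∂xᵢ²(t,x) = λ̄·w(t,x) − (c(t)/2)·(xᵀAx)·w(t,x). -/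
/-!
For `w = exp φ` with `φ = β − ½ xᵀBx` one has `∂ₜw = (β' − ½ xᵀB'x) w` and, `B` being symmetric,
`Δw = (|Bx|² − Tr B) w = (xᵀB²x − Tr B) w`. Hence `∂ₜw − Δw = (β' + Tr B − xᵀ(B'/2 + B²)x) w`,
and the Riccati equation together with `β' = λ̄ − Tr B` turns this into `(λ̄ − (c/2) xᵀAx) w`.
Time periodicity of `w` reduces to that of `β`, which holds because `λ̄ − Tr B` has mean zero
over a period.
-/

open Matrix

section DotProductCalculus

variable {𝕜 ι : Type*} [NontriviallyNormedField 𝕜] [Fintype ι]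
  {f g : 𝕜 → ι → 𝕜} {f' g' : ι → 𝕜} {t : 𝕜}

theorem HasDerivAt.dotProduct (hf : HasDerivAt f f' t) (hg : HasDerivAt g g' t) :
    HasDerivAt (fun s => f s ⬝ᵥ g s) (f' ⬝ᵥ g t + f t ⬝ᵥ g') t := by
  simp only [_root_.dotProduct, ← Finset.sum_add_distrib]
  exact HasDerivAt.fun_sum fun i _ => (hasDerivAt_pi.1 hf i).fun_mul (hasDerivAt_pi.1 hg i)

theorem HasDerivAt.const_mulVec {κ : Type*} (M : Matrix κ ι 𝕜) (hf : HasDerivAt f f' t) :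
    HasDerivAt (fun s => M *ᵥ f s) (M *ᵥ f') t :=
  hasDerivAt_pi.2 fun i => by
    simpa [mulVec] using (hasDerivAt_const t (M i)).dotProduct hf

theorem hasDerivAt_mulVec_const {κ : Type*} {B : 𝕜 → Matrix κ ι 𝕜} {B' : Matrix κ ι 𝕜}
    (hB : ∀ i j, HasDerivAt (fun s => B s i j) (B' i j) t) (v : ι → 𝕜) :
    HasDerivAt (fun s => B s *ᵥ v) (B' *ᵥ v) t :=
  hasDerivAt_pi.2 fun i => by
    simpa [mulVec] using (hasDerivAt_pi.2 (hB i)).dotProduct (hasDerivAt_const t v)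

end DotProductCalculus

section Gaussian

variable {ι : Type*} [Fintype ι]

noncomputable def gaussian (a : ℝ) (M : Matrix ι ι ℝ) (x : ι → ℝ) : ℝ :=
  Real.exp (a - 1 / 2 * (x ⬝ᵥ M *ᵥ x))

theorem hasDerivAt_gaussian_time {β : ℝ → ℝ} {β' t : ℝ} {B : ℝ → Matrix ι ι ℝ}
    {B' : Matrix ι ι ℝ} (hβ : HasDerivAt β β' t)
    (hB : ∀ i j, HasDerivAt (fun s => B s i j) (B' i j) t) (x : ι → ℝ) :
    HasDerivAt (fun s => gaussian (β s) (B s) x)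
      ((β' - 1 / 2 * (x ⬝ᵥ B' *ᵥ x)) * gaussian (β t) (B t) x) t := by
  have hq := (hasDerivAt_const t x).dotProduct (hasDerivAt_mulVec_const hB x)
  rw [zero_dotProduct, zero_add] at hq
  exact (hβ.sub (hq.const_mul (1 / 2))).exp.congr_deriv (mul_comm _ _)

theorem sum_mulVec_sq {M : Matrix ι ι ℝ} (hM : Mᵀ = M) (x : ι → ℝ) :
    ∑ i, (M *ᵥ x) i ^ 2 = x ⬝ᵥ (M * M) *ᵥ x := by
  rw [← mulVec_mulVec, dotProduct_mulVec, ← mulVec_transpose, hM]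
  simp only [dotProduct, sq]

variable [DecidableEq ι] {M : Matrix ι ι ℝ}

theorem hasDerivAt_update_dotProduct_mulVec (hM : Mᵀ = M) (x : ι → ℝ) (i : ι) (s : ℝ) :
    HasDerivAt (fun s => Function.update x i s ⬝ᵥ M *ᵥ Function.update x i s)
      (2 * (M *ᵥ Function.update x i s) i) s := by
  have h := (hasDerivAt_update x i s).dotProduct ((hasDerivAt_update x i s).const_mulVec M)
  refine h.congr_deriv ?_
  have hcol : M.col i = M i := funext fun j => congrFun (congrFun hM i) j
  rw [single_one_dotProduct, mulVec_single_one, hcol, dotProduct_comm, two_mul]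
  rfl

theorem hasDerivAt_gaussian_update (hM : Mᵀ = M) (a : ℝ) (x : ι → ℝ) (i : ι) (s : ℝ) :
    HasDerivAt (fun s => gaussian a M (Function.update x i s))
      (-(M *ᵥ Function.update x i s) i * gaussian a M (Function.update x i s)) s :=
  (((hasDerivAt_update_dotProduct_mulVec hM x i s).const_mul (1 / 2)).const_sub a).exp.congr_deriv
    (by rw [gaussian]; ring)

theorem deriv_deriv_gaussian_update (hM : Mᵀ = M) (a : ℝ) (x : ι → ℝ) (i : ι) :
    deriv (deriv fun s => gaussian a M (Function.update x i s)) (x i)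
      = ((M *ᵥ x) i ^ 2 - M i i) * gaussian a M x := by
  rw [funext fun s => (hasDerivAt_gaussian_update hM a x i s).deriv]
  have hlin : HasDerivAt (fun s => -(M *ᵥ Function.update x i s) i) (-M i i) (x i) := by
    have h := hasDerivAt_pi.1 ((hasDerivAt_update x i (x i)).const_mulVec M) i
    simpa [mulVec_single_one] using h.fun_neg
  have h := hlin.fun_mul (hasDerivAt_gaussian_update hM a x i (x i))
  rw [Function.update_eq_self] at h
  rw [h.deriv]
  ring

theorem sum_deriv_deriv_gaussian_update (hM : Mᵀ = M) (a : ℝ) (x : ι → ℝ) :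
    ∑ i, deriv (deriv fun s => gaussian a M (Function.update x i s)) (x i)
      = (x ⬝ᵥ (M * M) *ᵥ x - M.trace) * gaussian a M x := by
  simp only [deriv_deriv_gaussian_update hM, ← Finset.sum_mul, Finset.sum_sub_distrib,
    sum_mulVec_sq hM, Matrix.trace, Matrix.diag]

end Gaussian

theorem Continuous.periodic_intervalIntegral_mean_sub {g : ℝ → ℝ} {T : ℝ} (hg : Continuous g)
    (hper : Function.Periodic g T) (hT : T ≠ 0) :
    Function.Periodic (fun t => ∫ s in (0 : ℝ)..t, ((1 / T) * ∫ s in (0 : ℝ)..T, g s) - g s) T := by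
  intro t
  set m := (1 / T) * ∫ s in (0 : ℝ)..T, g s
  have hmean : ∫ s in (0 : ℝ)..T, (m - g s) = 0 := by
    rw [intervalIntegral.integral_sub intervalIntegrable_const (hg.intervalIntegrable _ _),
      intervalIntegral.integral_const, smul_eq_mul, sub_zero, ← mul_assoc,
      mul_one_div_cancel hT, one_mul, sub_self]
  have hper' : Function.Periodic (fun s => m - g s) T := fun s => by simp only [hper s]
  have h := hper'.intervalIntegral_add_eq_add 0 t fun a b =>
    (continuous_const.sub hg).intervalIntegrable a b
  rw [zero_add, hmean, add_zero] at h
  exact h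

theorem stmt_9_general (d : ℕ) (T : ℝ) (hT : 0 < T)
    (c : ℝ → ℝ)
    (A : Matrix (Fin d) (Fin d) ℝ)
    (B : ℝ → Matrix (Fin d) (Fin d) ℝ)
    (hBd : ∀ i j, Differentiable ℝ (fun t => B t i j))
    (hBper : ∀ t, B (t + T) = B t)
    (hBsym : ∀ t, (B t)ᵀ = B t)
    (hBeq : ∀ t, (1 / 2 : ℝ) • (Matrix.of fun i j => deriv (fun s => B s i j) t)
        + B t * B t = (c t / 2) • A)
    (lam : ℝ) (hlam : lam = (1 / T) * ∫ s in (0:ℝ)..T, (B s).trace)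
    (β : ℝ → ℝ) (hβ : ∀ t, β t = ∫ s in (0:ℝ)..t, (lam - (B s).trace))
    (w : ℝ → (Fin d → ℝ) → ℝ)
    (hw : ∀ t x, w t x = Real.exp (β t - (1 / 2) * (x ⬝ᵥ (B t).mulVec x))) :
    (∀ t x, w (t + T) x = w t x) ∧
    (∀ t x, deriv (fun s => w s x) t
        - ∑ i, deriv (deriv (fun s => w t (Function.update x i s))) (x i)
      = lam * w t x - (c t / 2) * (x ⬝ᵥ A.mulVec x) * w t x) := by
  obtain rfl : w = fun t x => gaussian (β t) (B t) x := funext fun t => funext (hw t)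
  have htrace : Continuous fun s => (B s).trace :=
    continuous_finsetSum _ fun i _ => (hBd i i).continuous
  have hβper : Function.Periodic β T := fun t => by
    rw [hβ, hβ, hlam]
    exact htrace.periodic_intervalIntegral_mean_sub (fun t => by simp only [hBper]) hT.ne' t
  refine ⟨fun t x => by simp only [hβper t, hBper t], fun t x => ?_⟩
  have hintegrand : Continuous fun s => lam - (B s).trace := continuous_const.sub htrace
  have hβ' : HasDerivAt β (lam - (B t).trace) t :=
    (hintegrand.integral_hasStrictDerivAt 0 t).hasDerivAt.congr_of_eventuallyEq (.of_forall hβ)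
  have hB' : ∀ i j, HasDerivAt (fun s => B s i j)
      (of (fun i j => deriv (fun s => B s i j) t) i j) t := fun i j => (hBd i j t).hasDerivAt
  rw [(hasDerivAt_gaussian_time hβ' hB' x).deriv, sum_deriv_deriv_gaussian_update (hBsym t)]
  have hriccati := congrArg (fun N => x ⬝ᵥ N *ᵥ x) (hBeq t)
  simp only [add_mulVec, smul_mulVec, dotProduct_add, dotProduct_smul, smul_eq_mul] at hriccati
  linear_combination (-gaussian (β t) (B t) x) * hriccati

/-- The Gaussian ansatz `w(t,x) = exp(β(t) − ½ xᵀB(t)x)` built from a `T`-periodic solution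
of the matrix Riccati equation `B'/2 + B² = (c/2)A` is `T`-periodic in time and solves
`∂ₜw − Δw = λ̄ w − (c/2)⟨x,Ax⟩ w` with `λ̄ = (1/T)∫₀ᵀ Tr B`. -/
theorem stmt_9 (d : ℕ) (hd : 1 ≤ d) (T : ℝ) (hT : 0 < T)
    (c : ℝ → ℝ) (hc : Continuous c) (hcper : ∀ t, c (t + T) = c t)
    (A : Matrix (Fin d) (Fin d) ℝ)
    (B : ℝ → Matrix (Fin d) (Fin d) ℝ)
    (hBd : ∀ i j, Differentiable ℝ (fun t => B t i j))
    (hBper : ∀ t, B (t + T) = B t)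
    (hBsym : ∀ t, (B t)ᵀ = B t)
    (hBeq : ∀ t, (1 / 2 : ℝ) • (Matrix.of fun i j => deriv (fun s => B s i j) t)
        + B t * B t = (c t / 2) • A)
    (lam : ℝ) (hlam : lam = (1 / T) * ∫ s in (0:ℝ)..T, (B s).trace)
    (β : ℝ → ℝ) (hβ : ∀ t, β t = ∫ s in (0:ℝ)..t, (lam - (B s).trace))
    (w : ℝ → (Fin d → ℝ) → ℝ)
    (hw : ∀ t x, w t x = Real.exp (β t - (1 / 2) * (x ⬝ᵥ (B t).mulVec x))) :
    (∀ t x, w (t + T) x = w t x) ∧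
    (∀ t x, deriv (fun s => w s x) t
        - ∑ i, deriv (deriv (fun s => w t (Function.update x i s))) (x i)
      = lam * w t x - (c t / 2) * (x ⬝ᵥ A.mulVec x) * w t x) :=
  stmt_9_general d T hT c A B hBd hBper hBsym hBeq lam hlam β hβ w hw
end

section
/- Let k be a natural number with k ≥ 1, let ω : ℝ → ℝ be ω(t) := (cos(t+π) + sin(t+π))/2, and define F : ℝ → ℝ by F(t) := ω(t)^{2k−2} · ((2k−1)·ω'(t) + ω(t)). Then F is differentiable at π and F'(π) = (2k−1)(2k−2)/2^{2k−1}. In particular F'(π) = 0 if and only if k = 1. -/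
/-!
With `n = 2k - 2` the function is `F = ω ^ n * ((n + 1) ω' + ω)`, and `ω'' = -ω`. At `π` we have
`ω = ω' = 1/2` and `ω'' = -1/2`, so the product rule gives
`F'(π) = n 2^{-n} ((n + 1)/2 + 1/2) + 2^{-n} (-(n + 1)/2 + 1/2) = n (n + 1) / 2^{n+1}`,
which vanishes exactly when `n = 0`.
-/

open Real

lemma hasDerivAt_cos_add_sin_div_two (c t : ℝ) :
    HasDerivAt (fun t => (cos (t + c) + sin (t + c)) / 2) ((cos (t + c) - sin (t + c)) / 2) t := by
  have hshift : HasDerivAt (fun t : ℝ => t + c) 1 t := (hasDerivAt_id t).add_const c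
  exact ((hshift.cos.add hshift.sin).div_const 2).congr_deriv (by ring)

lemma hasDerivAt_cos_sub_sin_div_two (c t : ℝ) :
    HasDerivAt (fun t => (cos (t + c) - sin (t + c)) / 2) (-((cos (t + c) + sin (t + c)) / 2)) t := by
  have hshift : HasDerivAt (fun t : ℝ => t + c) 1 t := (hasDerivAt_id t).add_const c
  exact ((hshift.cos.sub hshift.sin).div_const 2).congr_deriv (by ring)

lemma hasDerivAt_pow_mul_succ_mul_add {f g : ℝ → ℝ} {x : ℝ} (n : ℕ)
    (hf : HasDerivAt f (1 / 2) x) (hg : HasDerivAt g (-1 / 2) x)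
    (hfx : f x = 1 / 2) (hgx : g x = 1 / 2) :
    HasDerivAt (fun t => f t ^ n * ((n + 1) * g t + f t)) (n * (n + 1) / 2 ^ (n + 1)) x := by
  refine ((hf.pow n).mul ((hg.const_mul ((n : ℝ) + 1)).add hf)).congr_deriv ?_
  simp only [Pi.add_apply, Pi.pow_apply, hfx, hgx]
  rcases n with _ | n
  · norm_num
  · simp only [Nat.add_sub_cancel, one_div, inv_pow, pow_succ]
    push_cast
    field_simp
    ring

lemma natCast_mul_succ_div_two_pow_succ_eq_zero_iff (n : ℕ) :
    (n : ℝ) * (n + 1) / 2 ^ (n + 1) = 0 ↔ n = 0 := by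
  have hsucc : (n : ℝ) + 1 ≠ 0 := by positivity
  simp [hsucc]

/-- Key computation for symmetry breaking: for `ω(t) = (cos(t+π)+sin(t+π))/2` and
`F = ω^(2k−2)((2k−1)ω' + ω)`, the derivative of `F` at `π` equals
`(2k−1)(2k−2)/2^(2k−1)`, which vanishes iff `k = 1`. -/
theorem stmt_14 (k : ℕ) (hk : 1 ≤ k) (ω : ℝ → ℝ)
    (hω : ∀ t, ω t = (Real.cos (t + Real.pi) + Real.sin (t + Real.pi)) / 2)
    (F : ℝ → ℝ)
    (hF : ∀ t, F t = ω t ^ (2 * k - 2) * ((2 * (k : ℝ) - 1) * deriv ω t + ω t)) :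
    DifferentiableAt ℝ F Real.pi ∧
    deriv F Real.pi = (2 * (k : ℝ) - 1) * (2 * (k : ℝ) - 2) / 2 ^ (2 * k - 1) ∧
    (deriv F Real.pi = 0 ↔ k = 1) := by
  obtain ⟨m, rfl⟩ : ∃ m, k = m + 1 := ⟨k - 1, by omega⟩
  have hω_eq : ω = fun t => (cos (t + π) + sin (t + π)) / 2 := funext hω
  have hω' : deriv ω = fun t => (cos (t + π) - sin (t + π)) / 2 := by
    funext t
    rw [hω_eq]
    exact (hasDerivAt_cos_add_sin_div_two π t).deriv
  have hF_eq : F = fun t => ω t ^ (2 * m) * (((2 * m : ℕ) + 1) * deriv ω t + ω t) := by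
    funext t
    rw [hF t, show 2 * (m + 1) - 2 = 2 * m by omega]
    push_cast
    ring
  have hcos : cos (π + π) = 1 := by rw [← two_mul, cos_two_pi]
  have hsin : sin (π + π) = 0 := by rw [← two_mul, sin_two_pi]
  have hFπ : HasDerivAt F ((2 * m : ℕ) * ((2 * m : ℕ) + 1) / 2 ^ (2 * m + 1)) π := by
    rw [hF_eq]
    apply hasDerivAt_pow_mul_succ_mul_add
    · simpa [hω_eq, hcos, hsin] using hasDerivAt_cos_add_sin_div_two π π
    · rw [hω']
      exact (hasDerivAt_cos_sub_sin_div_two π π).congr_deriv (by norm_num [hcos, hsin])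
    · simp [hω, hcos, hsin]
    · simp [hω', hcos, hsin]
  refine ⟨hFπ.differentiableAt, ?_, ?_⟩
  · rw [hFπ.deriv, show 2 * (m + 1) - 1 = 2 * m + 1 by omega]
    push_cast
    ring
  · rw [hFπ.deriv, natCast_mul_succ_div_two_pow_succ_eq_zero_iff]
    omega
end

section
/- Let k be a natural number with k ≥ 2, let a ∈ ℝ with a ≠ 0, and let ω : ℝ → ℝ be ω(t) := (cos(t+π) + sin(t+π))/2. Suppose Ψ : ℝ → ℝ is differentiable and satisfies −Ψ'(t) + Ψ(t) = a·ω(t)^{2k−1} for all t ∈ ℝ. Then Ψ is not symmetric with respect to t = π: there exists t ∈ ℝ with Ψ(π + t) ≠ Ψ(π − t). -/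
/-!
If `Ψ' = Ψ - h` and `Ψ` is symmetric about `c`, then `Ψ'` is antisymmetric about `c`, so adding the
equation at `c + t` and `c - t` gives `Ψ (c + t) = (h (c + t) + h (c - t)) / 2`. Differentiating this
and using the equation once more shows that `h + h'` is symmetric about `c`. For `h = a ω^n`,
`n = 2k - 1`, and `c = π` this fails at `t = π / 2`: there `ω = ±1/2` and `ω' = ∓1/2`, so the two
values of `h + h'` are `± a (1 - n) / 2^n`.
-/

open Real

lemma deriv_add_eq_neg_deriv_sub_of_symm {f : ℝ → ℝ} {c : ℝ} (hf : ∀ t, f (c + t) = f (c - t))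
    (t : ℝ) : deriv f (c + t) = -deriv f (c - t) := by
  rw [← deriv_comp_const_add, ← deriv_comp_const_sub, funext hf]

lemma add_deriv_symm_of_deriv_eq_sub {Ψ h : ℝ → ℝ} {c : ℝ} (hh : Differentiable ℝ h)
    (hΨ : ∀ t, Ψ (c + t) = Ψ (c - t)) (heq : ∀ t, deriv Ψ t = Ψ t - h t) (t : ℝ) :
    h (c + t) + deriv h (c + t) = h (c - t) + deriv h (c - t) := by
  have hmean : ∀ t, Ψ (c + t) = (h (c + t) + h (c - t)) / 2 := fun t => by
    have := deriv_add_eq_neg_deriv_sub_of_symm hΨ t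
    rw [heq, heq] at this
    linarith [hΨ t]
  have hderiv : deriv Ψ (c + t) = (deriv h (c + t) * 1 + deriv h (c - t) * -1) / 2 := by
    rw [← deriv_comp_const_add, funext hmean]
    exact (((hh _).hasDerivAt.comp t ((hasDerivAt_id t).const_add c)).add
      ((hh _).hasDerivAt.comp t ((hasDerivAt_id t).const_sub c))).div_const 2 |>.deriv
  linarith [heq (c + t), hmean t]

section
variable {ω : ℝ → ℝ} (hω : ∀ t, ω t = (cos (t + π) + sin (t + π)) / 2)
include hω

lemma omega_eq_neg_cos_add_sin (t : ℝ) : ω t = -(cos t + sin t) / 2 := by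
  rw [hω, cos_add_pi, sin_add_pi]; ring

lemma hasDerivAt_omega (t : ℝ) : HasDerivAt ω ((sin t - cos t) / 2) t := by
  rw [funext (omega_eq_neg_cos_add_sin hω)]
  exact (((hasDerivAt_cos t).add (hasDerivAt_sin t)).neg.div_const 2).congr_deriv (by ring)

end

theorem stmt_15_general (k : ℕ) (hk : 2 ≤ k) (a : ℝ) (ha : a ≠ 0) (ω Ψ : ℝ → ℝ)
    (hω : ∀ t, ω t = (Real.cos (t + Real.pi) + Real.sin (t + Real.pi)) / 2)
    (heq : ∀ t, -deriv Ψ t + Ψ t = a * ω t ^ (2 * k - 1)) :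
    ∃ t, Ψ (Real.pi + t) ≠ Ψ (Real.pi - t) := by
  by_contra! hsymm
  obtain ⟨m, rfl⟩ : ∃ m, k = m + 1 := ⟨k - 1, by omega⟩
  rw [show 2 * (m + 1) - 1 = 2 * m + 1 by omega] at heq
  have hderiv (t : ℝ) : HasDerivAt (fun t => a * ω t ^ (2 * m + 1))
      (a * ((2 * m + 1 : ℕ) * ω t ^ (2 * m) * ((sin t - cos t) / 2))) t :=
    ((hasDerivAt_omega hω t).pow _).const_mul a
  have key := add_deriv_symm_of_deriv_eq_sub (fun t => (hderiv t).differentiableAt) hsymm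
    (fun t => by linarith [heq t]) (π / 2)
  rw [(hderiv _).deriv, (hderiv _).deriv, omega_eq_neg_cos_add_sin hω,
    omega_eq_neg_cos_add_sin hω, add_comm π, sin_add_pi, cos_add_pi] at key
  norm_num [(odd_two_mul_add_one m).neg_pow, pow_succ] at key
  have hzero : a * (1 / 2) ^ (2 * m) * m = 0 := by linarith
  simp [ha] at hzero
  omega

/-- Symmetry breaking: for `k ≥ 2` and `a ≠ 0`, no solution `Ψ` of
`−Ψ' + Ψ = a ω^(2k−1)`, with `ω(t) = (cos(t+π)+sin(t+π))/2`, is symmetric about `t = π`. -/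
theorem stmt_15 (k : ℕ) (hk : 2 ≤ k) (a : ℝ) (ha : a ≠ 0) (ω Ψ : ℝ → ℝ)
    (hω : ∀ t, ω t = (Real.cos (t + Real.pi) + Real.sin (t + Real.pi)) / 2)
    (hΨ : Differentiable ℝ Ψ)
    (heq : ∀ t, -deriv Ψ t + Ψ t = a * ω t ^ (2 * k - 1)) :
    ∃ t, Ψ (Real.pi + t) ≠ Ψ (Real.pi - t) :=
  stmt_15_general k hk a ha ω Ψ hω heq
end

section
/- Let T > 0, μ > 0, M ≥ 0, and λ ∈ ℝ. Let m : ℝ → ℝ → ℝ be continuous (as a function of (t,x)), T-periodic in the first variable, 1-periodic in the second variable, with |m(t,x)| ≤ M for all (t,x). Let u : ℝ → ℝ → ℝ be everywhere positive, twice continuously differentiable as a function of (t,x), T-periodic in the first variable and 1-periodic in the second variable, and suppose μ·(∂u/∂t(t,x) − ∂²u/∂x²(t,x)) = (λ + m(t,x))·u(t,x) for all (t,x). Then |λ| ≤ M. -/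
/-!
By periodicity `u` attains its maximum, at which `∂ₜu = 0` and `∂ₓₓu ≤ 0`; there the equation
gives `(λ + m) u ≥ 0`, whence `λ ≥ -M` since `u > 0`. At a minimum point the
inequalities reverse and `λ ≤ M`.
-/

open Set Filter Topology Function

theorem deriv_deriv_eq_zero_of_isLocalMax_of_isLocalMin {f : ℝ → ℝ} {x : ℝ}
    (hmax : IsLocalMax f x) (hmin : IsLocalMin f x) : deriv (deriv f) x = 0 := by
  have hconst : f =ᶠ[𝓝 x] fun _ => f x := by
    filter_upwards [hmax, hmin] with y hy₁ hy₂ using le_antisymm hy₁ hy₂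
  simpa using hconst.deriv.deriv_eq

-- If `f'' x > 0`, the second-derivative test makes `x` also a local minimum, so `f` is locally
-- constant near `x`.
theorem IsLocalMax.deriv_deriv_nonpos {f : ℝ → ℝ} {x : ℝ} (hmax : IsLocalMax f x)
    (hf : ContinuousAt f x) : deriv (deriv f) x ≤ 0 := by
  by_contra! h
  exact h.ne' <| deriv_deriv_eq_zero_of_isLocalMax_of_isLocalMin hmax
    (isLocalMin_of_deriv_deriv_pos h hmax.deriv_eq_zero hf)

theorem IsLocalMin.deriv_deriv_nonneg {f : ℝ → ℝ} {x : ℝ} (hmin : IsLocalMin f x)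
    (hf : ContinuousAt f x) : 0 ≤ deriv (deriv f) x := by
  by_contra! h
  exact h.ne <| deriv_deriv_eq_zero_of_isLocalMax_of_isLocalMin
    (isLocalMax_of_deriv_deriv_neg h hmin.deriv_eq_zero hf) hmin

noncomputable def heatOperator (u : ℝ → ℝ → ℝ) (t x : ℝ) : ℝ :=
  deriv (fun s => u s x) t - deriv (deriv (fun s => u t s)) x

section Extremum

variable {u : ℝ → ℝ → ℝ} {t₀ x₀ : ℝ}

theorem heatOperator_nonneg_of_isLocalMax (hmax : IsLocalMax (uncurry u) (t₀, x₀))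
    (hu : ContinuousAt (u t₀) x₀) : 0 ≤ heatOperator u t₀ x₀ := by
  have ht : IsLocalMax (fun s => u s x₀) t₀ :=
    hmax.comp_continuous (g := (·, x₀)) (Continuous.prodMk_left x₀).continuousAt
  have hx : IsLocalMax (u t₀) x₀ :=
    hmax.comp_continuous (g := (t₀, ·)) (Continuous.prodMk_right t₀).continuousAt
  rw [heatOperator, ht.deriv_eq_zero]
  linarith [hx.deriv_deriv_nonpos hu]

theorem heatOperator_nonpos_of_isLocalMin (hmin : IsLocalMin (uncurry u) (t₀, x₀))
    (hu : ContinuousAt (u t₀) x₀) : heatOperator u t₀ x₀ ≤ 0 := by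
  have ht : IsLocalMin (fun s => u s x₀) t₀ :=
    hmin.comp_continuous (g := (·, x₀)) (Continuous.prodMk_left x₀).continuousAt
  have hx : IsLocalMin (u t₀) x₀ :=
    hmin.comp_continuous (g := (t₀, ·)) (Continuous.prodMk_right t₀).continuousAt
  rw [heatOperator, ht.deriv_eq_zero]
  linarith [hx.deriv_deriv_nonneg hu]

end Extremum

section Periodic

variable {γ : Type*} {f : ℝ → ℝ → γ} {T L : ℝ}

theorem image_Icc_prod_Icc_eq_range_of_periodic (hT : 0 < T) (hL : 0 < L)
    (hfT : ∀ t x, f (t + T) x = f t x) (hfL : ∀ t x, f t (x + L) = f t x) :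
    uncurry f '' (Icc 0 T ×ˢ Icc 0 L) = range (uncurry f) := by
  refine (image_subset_range _ _).antisymm ?_
  rintro _ ⟨⟨t, x⟩, rfl⟩
  obtain ⟨t', ht', hft⟩ := Periodic.exists_mem_Ico₀ (f := (f · x)) (fun s => hfT s x) hT t
  obtain ⟨x', hx', hfx⟩ := Periodic.exists_mem_Ico₀ (f := f t') (hfL t') hL x
  exact ⟨(t', x'), ⟨Ico_subset_Icc_self ht', Ico_subset_Icc_self hx'⟩, by simp [hft, hfx]⟩

variable [LinearOrder γ] [TopologicalSpace γ] [OrderClosedTopology γ]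

theorem exists_isMaxOn_univ_of_periodic (hT : 0 < T) (hL : 0 < L)
    (hf : Continuous (uncurry f))
    (hfT : ∀ t x, f (t + T) x = f t x) (hfL : ∀ t x, f t (x + L) = f t x) :
    ∃ p, IsMaxOn (uncurry f) univ p := by
  obtain ⟨p, -, hp⟩ := (isCompact_Icc.prod isCompact_Icc).exists_isMaxOn
    ⟨(0, 0), ⟨left_mem_Icc.2 hT.le, left_mem_Icc.2 hL.le⟩⟩ hf.continuousOn
  refine ⟨p, fun q _ => ?_⟩
  obtain ⟨q', hq', hq'q⟩ :=
    (image_Icc_prod_Icc_eq_range_of_periodic hT hL hfT hfL).symm ▸ mem_range_self q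
  change uncurry f q ≤ uncurry f p
  exact hq'q ▸ hp hq'

theorem exists_isMinOn_univ_of_periodic (hT : 0 < T) (hL : 0 < L)
    (hf : Continuous (uncurry f))
    (hfT : ∀ t x, f (t + T) x = f t x) (hfL : ∀ t x, f t (x + L) = f t x) :
    ∃ p, IsMinOn (uncurry f) univ p :=
  exists_isMaxOn_univ_of_periodic (γ := γᵒᵈ) hT hL hf hfT hfL

end Periodic

theorem stmt_16_general (T μ M lam : ℝ) (hT : 0 < T) (hμ : 0 < μ)
    (m u : ℝ → ℝ → ℝ)
    (hmb : ∀ t x, |m t x| ≤ M)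
    (hupos : ∀ t x, 0 < u t x)
    (hu : ContDiff ℝ 2 fun p : ℝ × ℝ => u p.1 p.2)
    (huT : ∀ t x, u (t + T) x = u t x) (huX : ∀ t x, u t (x + 1) = u t x)
    (heq : ∀ t x, μ * (deriv (fun s => u s x) t - deriv (deriv (fun s => u t s)) x)
        = (lam + m t x) * u t x) :
    |lam| ≤ M := by
  have hc : Continuous (uncurry u) := hu.continuous
  obtain ⟨⟨t₁, x₁⟩, hmax⟩ := exists_isMaxOn_univ_of_periodic hT one_pos hc huT huX
  obtain ⟨⟨t₂, x₂⟩, hmin⟩ := exists_isMinOn_univ_of_periodic hT one_pos hc huT huX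
  have hH₁ := heatOperator_nonneg_of_isLocalMax (hmax.isLocalMax univ_mem)
    (hc.uncurry_left t₁).continuousAt
  have hH₂ := heatOperator_nonpos_of_isLocalMin (hmin.isLocalMin univ_mem)
    (hc.uncurry_left t₂).continuousAt
  have h₁ : 0 ≤ lam + m t₁ x₁ := by
    refine nonneg_of_mul_nonneg_left ?_ (hupos t₁ x₁)
    rw [← heq]
    exact mul_nonneg hμ.le hH₁
  have h₂ : lam + m t₂ x₂ ≤ 0 := by
    refine nonpos_of_mul_nonpos_left ?_ (hupos t₂ x₂)
    rw [← heq]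
    exact mul_nonpos_of_nonneg_of_nonpos hμ.le hH₂
  rw [abs_le]
  constructor <;> linarith [abs_le.mp (hmb t₁ x₁), abs_le.mp (hmb t₂ x₂)]

/-- Uniform eigenvalue bound: if `u > 0` is a time-space periodic solution of
`μ(∂ₜu − ∂ₓₓu) = (λ + m)u` with `|m| ≤ M`, then `|λ| ≤ M`. -/
theorem stmt_16 (T μ M lam : ℝ) (hT : 0 < T) (hμ : 0 < μ) (hM : 0 ≤ M)
    (m u : ℝ → ℝ → ℝ)
    (hm : Continuous fun p : ℝ × ℝ => m p.1 p.2)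
    (hmT : ∀ t x, m (t + T) x = m t x) (hmX : ∀ t x, m t (x + 1) = m t x)
    (hmb : ∀ t x, |m t x| ≤ M)
    (hupos : ∀ t x, 0 < u t x)
    (hu : ContDiff ℝ 2 fun p : ℝ × ℝ => u p.1 p.2)
    (huT : ∀ t x, u (t + T) x = u t x) (huX : ∀ t x, u t (x + 1) = u t x)
    (heq : ∀ t x, μ * (deriv (fun s => u s x) t - deriv (deriv (fun s => u t s)) x)
        = (lam + m t x) * u t x) :
    |lam| ≤ M :=
  stmt_16_general T μ M lam hT hμ m u hmb hupos hu huT huX heq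
end

section
/- Let λ ∈ ℝ and m : ℝ → ℝ → ℝ. Let φ, ψ : ℝ → ℝ → ℝ be such that for every (t,x) all the partial derivatives ∂φ/∂t, ∂φ/∂x, ∂²φ/∂x², ∂ψ/∂t, ∂ψ/∂x, ∂²ψ/∂x² exist, and suppose that for all (t,x): ∂φ/∂t − ∂²φ/∂x² + (∂φ/∂x)² = −λ − m and −∂ψ/∂t − ∂²ψ/∂x² + (∂ψ/∂x)² = −λ − m. Define α(t,x) := exp(−(φ(t,x)+ψ(t,x))/2) and β(t,x) := (φ(t,x)−ψ(t,x))/2. Then for all (t,x): (i) (1/2)·∂(α²)/∂t(t,x) + ∂/∂x(α(t,·)²·∂β/∂x(t,·))(x) = 0, i.e. the x-derivative of s ↦ α(t,s)²·∂β/∂x(t,s) at x equals −(1/2) times the t-derivative of s ↦ α(s,x)² at t; and (ii) −∂²α/∂x²(t,x) = (λ + m(t,x) + ∂β/∂t(t,x) + (∂β/∂x(t,x))²)·α(t,x). -/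
/-!
Write `α = exp a` with `a = -(φ + ψ)/2`. Then `∂ₓ(α² ∂ₓβ) = α² (2 aₓ βₓ + βₓₓ)`, `∂ₜ(α²) = 2 α² aₜ` and
`∂ₓₓα = α (aₓ² + aₓₓ)`. Since `φ = β - a` and `ψ = -a - β`, half the difference of the two
Hamilton–Jacobi equations reads `aₜ = -(2 aₓ βₓ + βₓₓ)`, which is (i), and half their sum reads
`-(aₓ² + aₓₓ) = λ + m + βₜ + βₓ²`, which is (ii).
-/

open Real

section
variable {f g : ℝ → ℝ} {x : ℝ}

lemma deriv_exp_sq (hf : DifferentiableAt ℝ f x) :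
    deriv (fun s => exp (f s) ^ 2) x = 2 * exp (f x) ^ 2 * deriv f x := by
  rw [(hf.hasDerivAt.exp.fun_pow 2).deriv]
  ring

lemma deriv_exp_sq_mul (hf : DifferentiableAt ℝ f x) (hg : DifferentiableAt ℝ g x) :
    deriv (fun s => exp (f s) ^ 2 * g s) x
      = exp (f x) ^ 2 * (2 * deriv f x * g x + deriv g x) := by
  rw [deriv_fun_mul (hf.exp.fun_pow 2) hg, deriv_exp_sq hf]
  ring

lemma deriv_deriv_exp (hf : Differentiable ℝ f) (hf' : DifferentiableAt ℝ (deriv f) x) :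
    deriv (deriv fun s => exp (f s)) x = exp (f x) * (deriv f x ^ 2 + deriv (deriv f) x) := by
  have hd : deriv (fun s => exp (f s)) = fun s => exp (f s) * deriv f s :=
    funext fun s => deriv_exp (hf s)
  rw [hd, deriv_fun_mul (hf x).exp hf', deriv_exp (hf x)]
  ring

lemma deriv_half_sub (hf : DifferentiableAt ℝ f x) (hg : DifferentiableAt ℝ g x) :
    deriv (fun s => (f s - g s) / 2) x = (deriv f x - deriv g x) / 2 :=
  ((hf.hasDerivAt.sub hg.hasDerivAt).div_const 2).deriv

lemma deriv_neg_half_add (hf : DifferentiableAt ℝ f x) (hg : DifferentiableAt ℝ g x) :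
    deriv (fun s => -(f s + g s) / 2) x = -(deriv f x + deriv g x) / 2 :=
  ((hf.hasDerivAt.add hg.hasDerivAt).neg.div_const 2).deriv

end

/-- From the coupled forward and backward Hamilton–Jacobi equations for `φ` and `ψ`,
the functions `α = exp(−(φ+ψ)/2)` and `β = (φ−ψ)/2` satisfy the continuity-type
equation `(1/2)∂ₜ(α²) + ∂ₓ(α² ∂ₓβ) = 0` and the elliptic-type equation
`−∂ₓₓα = (λ + m + ∂ₜβ + (∂ₓβ)²)α`. -/
theorem stmt_18 (lam : ℝ) (m φ ψ : ℝ → ℝ → ℝ)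
    (hφt : ∀ t x, DifferentiableAt ℝ (fun s => φ s x) t)
    (hφx : ∀ t x, DifferentiableAt ℝ (fun s => φ t s) x)
    (hφxx : ∀ t x, DifferentiableAt ℝ (deriv (fun s => φ t s)) x)
    (hψt : ∀ t x, DifferentiableAt ℝ (fun s => ψ s x) t)
    (hψx : ∀ t x, DifferentiableAt ℝ (fun s => ψ t s) x)
    (hψxx : ∀ t x, DifferentiableAt ℝ (deriv (fun s => ψ t s)) x)
    (hφeq : ∀ t x, deriv (fun s => φ s x) t - deriv (deriv (fun s => φ t s)) x
        + (deriv (fun s => φ t s) x) ^ 2 = -lam - m t x)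
    (hψeq : ∀ t x, -deriv (fun s => ψ s x) t - deriv (deriv (fun s => ψ t s)) x
        + (deriv (fun s => ψ t s) x) ^ 2 = -lam - m t x)
    (α β : ℝ → ℝ → ℝ)
    (hα : ∀ t x, α t x = Real.exp (-(φ t x + ψ t x) / 2))
    (hβ : ∀ t x, β t x = (φ t x - ψ t x) / 2) :
    (∀ t x, deriv (fun s => α t s ^ 2 * deriv (fun r => β t r) s) x
        = -(1 / 2) * deriv (fun s => α s x ^ 2) t) ∧
    (∀ t x, -deriv (deriv (fun s => α t s)) x
        = (lam + m t x + deriv (fun s => β s x) t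
            + (deriv (fun s => β t s) x) ^ 2) * α t x) := by
  have ha_x : ∀ t, deriv (fun s => -(φ t s + ψ t s) / 2)
      = fun s => -(deriv (fun r => φ t r) s + deriv (fun r => ψ t r) s) / 2 :=
    fun t => funext fun s => deriv_neg_half_add (hφx t s) (hψx t s)
  have hβ_x : ∀ t, deriv (fun s => (φ t s - ψ t s) / 2)
      = fun s => (deriv (fun r => φ t r) s - deriv (fun r => ψ t r) s) / 2 :=
    fun t => funext fun s => deriv_half_sub (hφx t s) (hψx t s)
  refine ⟨fun t x => ?_, fun t x => ?_⟩
  · simp only [hα, hβ]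
    rw [hβ_x, deriv_exp_sq_mul (f := fun s => -(φ t s + ψ t s) / 2) (by fun_prop) (by fun_prop),
      deriv_exp_sq (f := fun s => -(φ s x + ψ s x) / 2) (by fun_prop), ha_x,
      deriv_half_sub (hφxx t x) (hψxx t x), deriv_neg_half_add (hφt t x) (hψt t x)]
    linear_combination (-exp (-(φ t x + ψ t x) / 2) ^ 2 / 2) * (hφeq t x - hψeq t x)
  · simp only [hα, hβ]
    rw [deriv_deriv_exp (f := fun s => -(φ t s + ψ t s) / 2) (fun s => by fun_prop)
        (by rw [ha_x]; fun_prop), ha_x,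
      deriv_neg_half_add (hφxx t x) (hψxx t x), hβ_x,
      deriv_half_sub (hφt t x) (hψt t x)]
    linear_combination (-exp (-(φ t x + ψ t x) / 2) / 2) * (hφeq t x + hψeq t x)
end
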